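/- Block setting as above, with f : E → ℝ convex differentiable and (m, L_m)-blockwise smooth, g_i μ-strongly convex with μ ≥ 0, F := f + g, θ := m/M. Let β_k ∈ ℝ, ρ_k ∈ ℝ, η_k ∈ ℝ, and fix x^k ∈ E, λ^k ∈ ℝ^p, r^k := A x^k − b. For each S ∈ 𝒮_m define x^{k+1}(S) by: x^{k+1}(S)_i = x^k_i for i ∉ S, and for i ∈ S there is a subgradient v_i of g_i at x^{k+1}(S)_i with ∇_i f(x^k) − A_iᵀ(λ^k − β_k r^k) + v_i + η_k(x^{k+1}(S)_i − x^k_i) = 0; set r^{k+1}(S) := A x^{k+1}(S) − b and λ^{k+1}(S) := λ^k − ρ_k r^{k+1}(S). Then for every x ∈ E with Ax = b: E_S[ Φ(x^{k+1}, x, λ^{k+1}) + (β_k − ρ_k)‖r^{k+1}‖² + (μ/2)‖x^{k+1} − x‖² ] ≤ (1 − θ)( Φ(x^k, x, λ^k) + β_k‖r^k‖² + (μ/2)‖x^k − x‖² ) − E_S[ Δ_{η_k I − β_k AᵀA}(x^{k+1}, x^k, x) − (L_m/2)‖x^{k+1} − x^k‖² ], where E_S is the average over all S ∈ 𝒮_m.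 -/

import Mathlib

/-!
Write `ψ_i(y) = ⟪∇_i f(xᵏ) - A_iᵀ w, y - x_i⟫ + g_i(y) - g_i(x_i) + μ/2 ‖y - x_i‖²` with
`w = λᵏ - βₖ rᵏ`. For a fixed sample `S`, strong convexity of `g_i` and the optimality condition of
the block update give the three-point inequality `ψ_i(xᵏ⁺¹_i) ≤ -ηₖ ⟪xᵏ⁺¹_i - xᵏ_i, xᵏ⁺¹_i - x_i⟫`
for `i ∈ S`, while the blocks outside `S` do not move. Together with the `m`-blockwise descent
inequality for `f` between `xᵏ` and `xᵏ⁺¹` (they differ in at most `m` blocks), this bounds the new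
Lyapunov quantity plus the `Δ`-term by `f(xᵏ) - f(x) - ⟪∇f(xᵏ), xᵏ - x⟫ + ∑_{i ∉ S} ψ_i(xᵏ_i)`.
A block misses a uniformly random `m`-subset with probability `1 - m/M`, so averaging over `S`
turns the sum into `(1 - θ) ∑_i ψ_i(xᵏ_i)`, and the remaining term is `≤ 0` by convexity of `f`.
-/

open Set Filter Topology Finset
open scoped BigOperators RealInnerProductSpace

/-- The product space `∏ i, ℝ^{n i}` with the ℓ² product inner product. -/
abbrev blockE (M : ℕ) (n : Fin M → ℕ) : Type :=
  PiLp 2 (fun i : Fin M => EuclideanSpace ℝ (Fin (n i)))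

theorem ConvexOn.add_le_of_hasFDerivAt {E : Type*} [NormedAddCommGroup E] [NormedSpace ℝ E]
    {s : Set E} {f : E → ℝ} {f' : E →L[ℝ] ℝ} {y z : E} (hf : ConvexOn ℝ s f) (hy : y ∈ s)
    (hz : z ∈ s) (hf' : HasFDerivAt f f' y) : f y + f' (z - y) ≤ f z := by
  have hφ := hf.comp_affineMap (AffineMap.lineMap (k := ℝ) y z)
  have hφ' : HasDerivAt (f ∘ AffineMap.lineMap (k := ℝ) y z) (f' (z - y)) 0 :=
    HasFDerivAt.comp_hasDerivAt (0 : ℝ) (by simpa using hf') AffineMap.hasDerivAt_lineMap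
  have h := hφ.le_slope_of_hasDerivAt (by simpa using hy) (by simpa using hz) one_pos hφ'
  simp only [slope_def_field, Function.comp_apply, AffineMap.lineMap_apply_zero,
    AffineMap.lineMap_apply_one, sub_zero, div_one] at h
  linarith

theorem StrongConvexOn.add_inner_add_le_of_subgradient {E : Type*} [NormedAddCommGroup E]
    [InnerProductSpace ℝ E] {s : Set E} {g : E → ℝ} {μ : ℝ} {y z v : E}
    (hg : StrongConvexOn s μ g) (hy : y ∈ s) (hz : z ∈ s)
    (hv : ∀ u ∈ s, g y + ⟪v, u - y⟫ ≤ g u) :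
    g y + ⟪v, z - y⟫ + μ / 2 * ‖z - y‖ ^ 2 ≤ g z := by
  have hlim : Tendsto (fun t : ℝ => g y + ⟪v, z - y⟫ + (1 - t) * (μ / 2 * ‖z - y‖ ^ 2))
      (𝓝[>] 0) (𝓝 (g y + ⟪v, z - y⟫ + μ / 2 * ‖z - y‖ ^ 2)) := by
    refine Tendsto.mono_left ?_ nhdsWithin_le_nhds
    exact (continuous_const.add ((continuous_const.sub continuous_id).mul continuous_const)).tendsto'
      _ _ (by simp)
  refine le_of_tendsto hlim ?_
  filter_upwards [Ioo_mem_nhdsGT one_pos] with t ⟨ht0, ht1⟩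
  have hseg := hg.2 hy hz (by linarith : 0 ≤ 1 - t) ht0.le (by ring)
  have hsub := hv _ (hg.1 hy hz (by linarith : 0 ≤ 1 - t) ht0.le (by ring))
  have hpt : (1 - t) • y + t • z - y = t • (z - y) := by module
  rw [hpt, real_inner_smul_right] at hsub
  simp only [smul_eq_mul, norm_sub_rev y z] at hseg
  have : t * (g y + ⟪v, z - y⟫ + (1 - t) * (μ / 2 * ‖z - y‖ ^ 2)) ≤ t * g z := by nlinarith
  exact le_of_mul_le_mul_left this ht0

theorem Finset.sum_powersetCard_sum_compl {ι M : Type*} [Fintype ι] [DecidableEq ι]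
    [AddCommMonoid M] (m : ℕ) (a : ι → M) :
    ∑ S ∈ powersetCard m univ, ∑ i ∈ Sᶜ, a i = (Fintype.card ι - 1).choose m • ∑ i, a i := by
  rw [sum_comm' (t' := univ) (s' := fun i => powersetCard m (univ.erase i))]
  · simp [sum_const, card_powersetCard, card_erase_of_mem, smul_sum]
  · intro S i
    simp only [mem_powersetCard, mem_compl, mem_univ, subset_univ, true_and,
      subset_erase, and_comm]

theorem Finset.expect_powersetCard_sum_compl {ι : Type*} [Fintype ι] [DecidableEq ι] {m : ℕ}
    (hm : m ≤ Fintype.card ι) (a : ι → ℝ) :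
    𝔼 S ∈ powersetCard m univ, ∑ i ∈ Sᶜ, a i = (1 - m / Fintype.card ι) * ∑ i, a i := by
  rw [expect_eq_sum_div_card, sum_powersetCard_sum_compl, card_powersetCard, card_univ,
    nsmul_eq_mul]
  rcases Nat.eq_zero_or_pos (Fintype.card ι) with h | h
  · obtain rfl : m = 0 := by omega
    simp [h]
  obtain ⟨N, hN⟩ : ∃ N, Fintype.card ι = N + 1 := ⟨_, (Nat.succ_pred_eq_of_pos h).symm⟩
  have hc := Nat.choose_mul_succ_eq N m
  rw [hN, Nat.add_sub_cancel]
  have hpos : ((N + 1).choose m : ℝ) ≠ 0 := Nat.cast_ne_zero.2 (Nat.choose_pos (by omega)).ne'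
  have hc' : (N.choose m : ℝ) * (N + 1) = (N + 1).choose m * (N + 1 - m) := by
    have := congrArg (Nat.cast (R := ℝ)) hc
    push_cast [Nat.cast_sub (hN ▸ hm)] at this
    exact this
  field_simp
  push_cast
  linear_combination (∑ i, a i) * hc'

theorem Finset.expect_le_of_forall_add_le {α : Type*} {s : Finset α} (hs : s.Nonempty)
    {X D Z : α → ℝ} {C : ℝ} (h : ∀ a ∈ s, X a + D a ≤ C + Z a) :
    𝔼 a ∈ s, X a ≤ C + 𝔼 a ∈ s, Z a - 𝔼 a ∈ s, D a := by
  have := expect_le_expect h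
  rw [expect_add_distrib, expect_add_distrib, expect_const hs] at this
  linarith

theorem half_mul_norm_sq_sub_norm_sq_add_norm_sub_sq {W : Type*} [NormedAddCommGroup W]
    [InnerProductSpace ℝ W] (a a' : W) :
    1 / 2 * (‖a‖ ^ 2 - ‖a'‖ ^ 2 + ‖a - a'‖ ^ 2) = ⟪a - a', a⟫ := by
  rw [norm_sub_sq_real, inner_sub_left, real_inner_self_eq_norm_sq, real_inner_comm]
  ring

theorem StrongConvexOn.three_point_le_of_prox_step {E V : Type*} [NormedAddCommGroup E] [InnerProductSpace ℝ E] [CompleteSpace E]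
    [NormedAddCommGroup V] [InnerProductSpace ℝ V] [CompleteSpace V] {A : E →L[ℝ] V}
    {g : E → ℝ} {μ η : ℝ} (hg : StrongConvexOn univ μ g) {c y y' z v : E} {w : V}
    (hv : ∀ u, g y' + ⟪v, u - y'⟫ ≤ g u)
    (hopt : c - ContinuousLinearMap.adjoint A w + v + η • (y' - y) = 0) :
    ⟪c, y' - z⟫ + g y' - g z - ⟪w, A (y' - z)⟫ + μ / 2 * ‖y' - z‖ ^ 2
      ≤ -η * ⟪y' - y, y' - z⟫ := by
  have h := hg.add_inner_add_le_of_subgradient trivial trivial (z := z) fun u _ => hv u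
  have hv' : v = -(c - ContinuousLinearMap.adjoint A w + η • (y' - y)) := by
    linear_combination (norm := module) hopt
  rw [hv', norm_sub_rev] at h
  simp only [inner_neg_left, inner_add_left, inner_sub_left, real_inner_smul_left,
    ContinuousLinearMap.adjoint_inner_left, inner_sub_right, map_sub] at h ⊢
  linarith

section Blocks

variable {ι : Type*} [Fintype ι] {E : ι → Type*} [∀ i, NormedAddCommGroup (E i)]
  [∀ i, InnerProductSpace ℝ (E i)] {V : Type*} [NormedAddCommGroup V] [InnerProductSpace ℝ V]

theorem PiLp.sum_le_sum_compl_sub_inner [DecidableEq ι] {ψ : ∀ i, E i → ℝ} {S : Finset ι}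
    {y y' z : PiLp 2 E} {η : ℝ} (hfix : ∀ i ∉ S, y' i = y i)
    (hle : ∀ i ∈ S, ψ i (y' i) ≤ -η * ⟪y' i - y i, y' i - z i⟫) :
    ∑ i, ψ i (y' i) ≤ ∑ i ∈ Sᶜ, ψ i (y i) - η * ⟪y' - y, y' - z⟫ := by
  have hinner : ⟪y' - y, y' - z⟫ = ∑ i ∈ S, ⟪y' i - y i, y' i - z i⟫ := by
    rw [PiLp.inner_apply, ← sum_add_sum_compl S, sum_eq_zero (s := Sᶜ) fun i hi => by
      simp [hfix i (mem_compl.1 hi)], add_zero]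
    rfl
  have hcompl : ∑ i ∈ Sᶜ, ψ i (y' i) = ∑ i ∈ Sᶜ, ψ i (y i) :=
    sum_congr rfl fun i hi => by rw [hfix i (mem_compl.1 hi)]
  have hS := sum_le_sum hle
  rw [← sum_add_sum_compl S, hcompl, hinner, mul_sum]
  simp only [neg_mul, sum_neg_distrib] at hS
  linarith

variable (A : ∀ i, E i →L[ℝ] V) (g : ∀ i, E i → ℝ) (c z : PiLp 2 E) (w : V) (μ : ℝ)

/-- The `ψ_i` above, for a general reference point `z` (the `x` above) and multiplier `w`. -/
noncomputable def blockGap (i : ι) (y : E i) : ℝ :=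
  ⟪c i, y - z i⟫ + g i y - g i (z i) - ⟪w, A i (y - z i)⟫ + μ / 2 * ‖y - z i‖ ^ 2

theorem sum_blockGap {Amap : PiLp 2 E → V} (hAmap : ∀ u, Amap u = ∑ i, A i (u i))
    (y : PiLp 2 E) :
    ∑ i, blockGap A g c z w μ i (y i) = ⟪c, y - z⟫ + ∑ i, g i (y i) - ∑ i, g i (z i)
      - ⟪w, Amap y - Amap z⟫ + μ / 2 * ‖y - z‖ ^ 2 := by
  simp only [blockGap, sum_add_distrib, sum_sub_distrib, ← mul_sum, ← inner_sum, hAmap,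
    PiLp.inner_apply, PiLp.norm_sq_eq_of_L2, map_sub, PiLp.sub_apply]

theorem lyapunov_step_le [DecidableEq ι] [∀ i, CompleteSpace (E i)] [CompleteSpace V]
    {Amap : PiLp 2 E → V} (hAmap : ∀ u, Amap u = ∑ i, A i (u i))
    {f F : PiLp 2 E → ℝ} (hF : ∀ u, F u = f u + ∑ i, g i (u i)) {L : ℝ}
    (hg : ∀ i, StrongConvexOn univ μ (g i))
    {β ρ η : ℝ} {q : PiLp 2 E → ℝ} (hq : ∀ u, q u = η * ‖u‖ ^ 2 - β * ‖Amap u‖ ^ 2)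
    {b lam r rp lamp : V} {x xk xp : PiLp 2 E} {S : Finset ι}
    (hr : r = Amap xk - b) (hrp : rp = Amap xp - b) (hlamp : lamp = lam - ρ • rp)
    (hx : Amap x = b)
    (hsmooth : f xp ≤ f xk + ⟪c, xp - xk⟫ + L / 2 * ‖xp - xk‖ ^ 2)
    (hfix : ∀ i ∉ S, xp i = xk i)
    (hopt : ∀ i ∈ S, ∃ v, (∀ u, g i (xp i) + ⟪v, u - xp i⟫ ≤ g i u) ∧
        c i - ContinuousLinearMap.adjoint (A i) (lam - β • r) + v + η • (xp i - xk i) = 0) :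
    ((F xp - F x - ⟪lamp, Amap xp - b⟫) + (β - ρ) * ‖rp‖ ^ 2 + μ / 2 * ‖xp - x‖ ^ 2)
      + (1 / 2 * (q (xp - x) - q (xk - x) + q (xp - xk)) - L / 2 * ‖xp - xk‖ ^ 2)
    ≤ f xk - f x - ⟪c, xk - x⟫ + ∑ i ∈ Sᶜ, blockGap A g c x (lam - β • r) μ i (xk i) := by
  have hgap := PiLp.sum_le_sum_compl_sub_inner (ψ := blockGap A g c x (lam - β • r) μ) (z := x)
    hfix fun i hi => by
      obtain ⟨v, hv, hopt⟩ := hopt i hi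
      exact StrongConvexOn.three_point_le_of_prox_step (hg i) hv hopt
  rw [sum_blockGap A g c x _ μ hAmap] at hgap
  have hAsub : ∀ u u', Amap (u - u') = Amap u - Amap u' := fun u u' => by
    simp only [hAmap, PiLp.sub_apply, map_sub, sum_sub_distrib]
  have hq' : 1 / 2 * (q (xp - x) - q (xk - x) + q (xp - xk))
      = η * ⟪xp - xk, xp - x⟫ - β * ⟪rp - r, rp⟫ := by
    have e := sub_sub_sub_cancel_right xp xk x
    rw [hq, hq, hq, ← e, hAsub (xp - x), hAsub xp, hAsub xk, hx, ← hr, ← hrp]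
    linear_combination η * half_mul_norm_sq_sub_norm_sq_add_norm_sub_sq (xp - x) (xk - x)
      - β * half_mul_norm_sq_sub_norm_sq_add_norm_sub_sq rp r
  rw [hF, hF, hq', hlamp, ← hrp]
  rw [hx, ← hrp] at hgap
  simp only [inner_sub_left, inner_sub_right, real_inner_smul_left,
    real_inner_self_eq_norm_sq] at hgap hsmooth ⊢
  linarith

end Blocks

theorem stmt_7
    {M m p : ℕ} (hmM : m ≤ M) {n : Fin M → ℕ}
    (A : ∀ i : Fin M, EuclideanSpace ℝ (Fin (n i)) →L[ℝ] EuclideanSpace ℝ (Fin p))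
    (b : EuclideanSpace ℝ (Fin p))
    (Amap : blockE M n → EuclideanSpace ℝ (Fin p))
    (hAmap : ∀ z, Amap z = ∑ i, A i (z i))
    (f : blockE M n → ℝ) (Gf : blockE M n → blockE M n)
    (hfconv : ConvexOn ℝ Set.univ f)
    (hfgrad : ∀ z, HasGradientAt f (Gf z) z)
    (Lm : ℝ)
    (hfsmooth : ∀ u w : blockE M n, ∀ S : Finset (Fin M), S.card ≤ m →
      (∀ i ∉ S, u i = w i) →
      f u ≤ f w + inner ℝ (Gf w) (u - w) + Lm / 2 * ‖u - w‖ ^ 2)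
    (gi : ∀ i : Fin M, EuclideanSpace ℝ (Fin (n i)) → ℝ)
    (μ : ℝ)
    (hgi : ∀ i, ConvexOn ℝ Set.univ (fun z => gi i z - μ / 2 * ‖z‖ ^ 2))
    (F : blockE M n → ℝ) (hF : ∀ z, F z = f z + ∑ i, gi i (z i))
    (βk ρk ηk : ℝ)
    (xk : blockE M n) (lamk : EuclideanSpace ℝ (Fin p))
    (rk : EuclideanSpace ℝ (Fin p)) (hrk : rk = Amap xk - b)
    (xkp : Finset (Fin M) → blockE M n)
    (rkp lamkp : Finset (Fin M) → EuclideanSpace ℝ (Fin p))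
    (hfix : ∀ S ∈ Finset.powersetCard m (Finset.univ : Finset (Fin M)),
      ∀ i ∉ S, xkp S i = xk i)
    (hopt : ∀ S ∈ Finset.powersetCard m (Finset.univ : Finset (Fin M)),
      ∀ i ∈ S, ∃ v : EuclideanSpace ℝ (Fin (n i)),
        (∀ z, gi i (xkp S i) + inner ℝ v (z - xkp S i) ≤ gi i z) ∧
        Gf xk i - ContinuousLinearMap.adjoint (A i) (lamk - βk • rk)
          + v + ηk • (xkp S i - xk i) = 0)
    (hrkp : ∀ S ∈ Finset.powersetCard m (Finset.univ : Finset (Fin M)),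
      rkp S = Amap (xkp S) - b)
    (hlamkp : ∀ S ∈ Finset.powersetCard m (Finset.univ : Finset (Fin M)),
      lamkp S = lamk - ρk • rkp S)
    (qA : blockE M n → ℝ)
    (hqA : ∀ u, qA u = ηk * ‖u‖ ^ 2 - βk * ‖Amap u‖ ^ 2)
    (x : blockE M n) (hx : Amap x = b) :
    ((Finset.powersetCard m (Finset.univ : Finset (Fin M))).card : ℝ)⁻¹ *
      ∑ S ∈ Finset.powersetCard m (Finset.univ : Finset (Fin M)),
        ((F (xkp S) - F x - inner ℝ (lamkp S) (Amap (xkp S) - b))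
          + (βk - ρk) * ‖rkp S‖ ^ 2 + μ / 2 * ‖xkp S - x‖ ^ 2)
    ≤ (1 - (m : ℝ) / M) *
        ((F xk - F x - inner ℝ lamk (Amap xk - b))
          + βk * ‖rk‖ ^ 2 + μ / 2 * ‖xk - x‖ ^ 2)
      - ((Finset.powersetCard m (Finset.univ : Finset (Fin M))).card : ℝ)⁻¹ *
          ∑ S ∈ Finset.powersetCard m (Finset.univ : Finset (Fin M)),
            (1 / 2 * (qA (xkp S - x) - qA (xk - x) + qA (xkp S - xk))
              - Lm / 2 * ‖xkp S - xk‖ ^ 2) := by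
  have hmM' : m ≤ Fintype.card (Fin M) := by simpa using hmM
  have key := fun S hS => lyapunov_step_le A gi (Gf xk) μ hAmap hF
    (fun i => strongConvexOn_iff_convex.2 (hgi i)) hqA hrk (hrkp S hS) (hlamkp S hS) hx
    (hfsmooth _ _ S (mem_powersetCard.1 hS).2.le (hfix S hS)) (hfix S hS) (hopt S hS)
  have havg := expect_le_of_forall_add_le (powersetCard_nonempty.2 hmM') key
  rw [expect_powersetCard_sum_compl hmM', Fintype.card_fin] at havg
  have hψ := sum_blockGap A gi (Gf xk) x (lamk - βk • rk) μ hAmap xk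
  rw [hx, ← hrk, inner_sub_left, real_inner_smul_left, real_inner_self_eq_norm_sq] at hψ
  have hconv : f xk + ⟪Gf xk, x - xk⟫ ≤ f x :=
    hfconv.add_le_of_hasFDerivAt trivial trivial (hfgrad xk).hasFDerivAt
  have hθC : (m : ℝ) / M * (f xk - f x - ⟪Gf xk, xk - x⟫) ≤ 0 := by
    refine mul_nonpos_of_nonneg_of_nonpos (by positivity) ?_
    rw [← neg_sub xk x, inner_neg_right] at hconv
    linarith
  simp only [inv_mul_eq_div, ← expect_eq_sum_div_card]
  rw [← hrk]
  linear_combination havg + hθC + (1 - (m : ℝ) / M) * (hψ + hF x - hF xk)
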